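/- arXiv:math/0502486 — 3 statements merged into one kernel-verified Lean document; each statement's English description precedes it below -/
import Mathlib

section
/- Let $x_n, y_n$ be sequences of nonzero complex numbers, let $\lambda_n$ be positive reals with $\lambda_n \to 1$, and let $z \in \mathbb{C}$ with $|z| < 1$, such that $x_{n+1} y_n - z^2 x_n y_{n+1} = \lambda_n$ for all $n$. If $y_n \to y_\infty$ with $y_\infty \neq 0$, then $x_n \to 1/(y_\infty (1 - z^2))$. -/
open Filter Complex Topology

lemma aux_contract (e c f : ℕ → ℂ) (r : ℝ) (hr0 : 0 ≤ r) (hr1 : r < 1)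
    (hc : ∀ᶠ n in atTop, ‖c n‖ ≤ r)
    (hf : Tendsto f atTop (𝓝 0))
    (hrec : ∀ᶠ n in atTop, e (n + 1) = c n * e n + f n) :
    Tendsto e atTop (𝓝 0) := by
  rw [NormedAddCommGroup.tendsto_nhds_zero]
  intro ε hε
  have hε2 : (0:ℝ) < ε * (1 - r) / 2 := div_pos (mul_pos hε (by linarith)) two_pos
  have hf' : ∀ᶠ n in atTop, ‖f n‖ ≤ ε * (1 - r) / 2 :=
    ((by simpa using hf.norm : Tendsto (fun n => ‖f n‖) atTop (𝓝 0)).eventually_lt_const hε2).mono fun n h => h.le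
  obtain ⟨N, hN⟩ := eventually_atTop.1 ((hc.and hf').and hrec)
  have claim : ∀ k, ‖e (N + k)‖ ≤ r ^ k * ‖e N‖ + ε / 2 := by
    intro k
    induction k with
    | zero => simp; linarith
    | succ k ih =>
      have hNk := hN (N + k) (Nat.le_add_right N k)
      have h1 : e (N + (k + 1)) = c (N + k) * e (N + k) + f (N + k) := by
        rw [show N + (k + 1) = (N + k) + 1 by ring]; exact hNk.2
      calc ‖e (N + (k + 1))‖ ≤ ‖c (N + k)‖ * ‖e (N + k)‖ + ‖f (N + k)‖ := by
              rw [h1]; exact (norm_add_le _ _).trans (by rw [norm_mul])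
        _ ≤ r * (r ^ k * ‖e N‖ + ε / 2) + ε * (1 - r) / 2 := by
              have := hNk.1.1
              have := hNk.1.2
              have h2 : ‖c (N + k)‖ * ‖e (N + k)‖ ≤ r * (r ^ k * ‖e N‖ + ε / 2) :=
                mul_le_mul hNk.1.1 ih (norm_nonneg _) hr0
              linarith
        _ ≤ r ^ (k + 1) * ‖e N‖ + ε / 2 := by ring_nf; nlinarith [norm_nonneg (e N)]
  have hpow : Tendsto (fun k => r ^ k * ‖e N‖) atTop (𝓝 0) := by
    simpa using (tendsto_pow_atTop_nhds_zero_of_lt_one hr0 hr1).mul_const ‖e N‖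
  obtain ⟨K, hK⟩ := eventually_atTop.1 (hpow.eventually_lt_const (by positivity : (0:ℝ) < ε / 2))
  rw [eventually_atTop]
  refine ⟨N + K, fun n hn => ?_⟩
  have hnN : N ≤ n := le_trans (Nat.le_add_right N K) hn
  have hkey := claim (n - N)
  rw [Nat.add_sub_cancel' hnN] at hkey
  have hKle : K ≤ n - N := Nat.le_sub_of_add_le (by omega)
  have : r ^ (n - N) * ‖e N‖ ≤ r ^ K * ‖e N‖ :=
    mul_le_mul_of_nonneg_right (pow_le_pow_of_le_one hr0 hr1.le hKle) (norm_nonneg _)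
  have := hK K le_rfl
  linarith [claim (n - N), hK K le_rfl]

theorem stmt_0 (x y : ℕ → ℂ) (hx : ∀ n, x n ≠ 0) (hy : ∀ n, y n ≠ 0)
    (lam : ℕ → ℝ) (hlam : ∀ n, 0 < lam n)
    (hlamlim : Tendsto lam atTop (𝓝 1))
    (z : ℂ) (hz : ‖z‖ < 1)
    (hrec : ∀ n ≥ 1, x (n + 1) * y n - z ^ 2 * x n * y (n + 1) = (lam n : ℂ))
    (yinf : ℂ) (hyinf : yinf ≠ 0) (hylim : Tendsto y atTop (𝓝 yinf)) :
    Tendsto x atTop (𝓝 (1 / (yinf * (1 - z ^ 2)))) := by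
  set L : ℂ := 1 / (yinf * (1 - z ^ 2)) with hL
  have hz2 : ‖z ^ 2‖ < 1 := by
    rw [norm_pow]
    calc ‖z‖ ^ 2 ≤ ‖z‖ := by nlinarith [norm_nonneg z]
      _ < 1 := hz
  have hz2ne : (1 : ℂ) - z ^ 2 ≠ 0 := by
    intro h
    have : (1:ℂ) = z ^ 2 := by linear_combination h
    rw [← this] at hz2; simp at hz2
  set c : ℕ → ℂ := fun n => z ^ 2 * (y (n + 1) / y n) with hcdef
  set f : ℕ → ℂ := fun n => c n * L + (lam n : ℂ) / y n - L with hfdef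
  set e : ℕ → ℂ := fun n => x n - L with hedef
  -- limits
  have hy1 : Tendsto (fun n => y (n + 1)) atTop (𝓝 yinf) :=
    hylim.comp (tendsto_add_atTop_nat 1)
  have hctend : Tendsto c atTop (𝓝 (z ^ 2)) := by
    have : Tendsto (fun n => y (n + 1) / y n) atTop (𝓝 (yinf / yinf)) := hy1.div hylim hyinf
    rw [div_self hyinf] at this
    simpa using (tendsto_const_nhds (x := z ^ 2)).mul this
  have hlamC : Tendsto (fun n => ((lam n : ℝ) : ℂ)) atTop (𝓝 1) := by
    have := (Complex.continuous_ofReal.tendsto 1).comp hlamlim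
    simpa [Function.comp_def] using this
  have hftend : Tendsto f atTop (𝓝 0) := by
    have h1 : Tendsto (fun n => c n * L + (lam n : ℂ) / y n - L) atTop
        (𝓝 (z ^ 2 * L + 1 / yinf - L)) :=
      ((hctend.mul_const L).add (hlamC.div hylim hyinf)).sub tendsto_const_nhds
    have h2 : z ^ 2 * L + 1 / yinf - L = 0 := by
      rw [hL]; field_simp; ring
    rw [h2] at h1; exact h1
  set r : ℝ := (‖z ^ 2‖ + 1) / 2 with hrdef
  have hr0 : 0 ≤ r := by positivity
  have hr1 : r < 1 := by rw [hrdef]; linarith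
  have hcr : ∀ᶠ n in atTop, ‖c n‖ ≤ r := by
    have : ‖z ^ 2‖ < r := by rw [hrdef]; linarith
    exact (hctend.norm.eventually_lt_const this).mono fun n h => h.le
  have hrec' : ∀ᶠ n in atTop, e (n + 1) = c n * e n + f n := by
    rw [eventually_atTop]
    refine ⟨1, fun n hn => ?_⟩
    have h := hrec n hn
    have hyn := hy n
    simp only [hedef, hcdef, hfdef]
    field_simp
    linear_combination h
  have := aux_contract e c f r hr0 hr1 hcr hftend hrec'
  have : Tendsto (fun n => e n + L) atTop (𝓝 (0 + L)) := this.add_const L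
  simpa [hedef] using this
end

section
/- Let $x_n, y_n$ be sequences of nonzero complex numbers, $\lambda_n$ positive reals with $\lambda_n \to 1$, and $z \in \mathbb{C}$ with $|z|<1$, satisfying $x_{n+1} y_n - z^2 x_n y_{n+1} = \lambda_n$ for all $n$. If $x_n \to x_\infty \neq 0$ and $z^{2n} y_n \to 0$, then $y_n \to 1/(x_\infty (1-z^2))$. -/
open Filter Complex Topology

theorem stmt_1 (x y : ℕ → ℂ) (hx : ∀ n, x n ≠ 0) (hy : ∀ n, y n ≠ 0)
    (lam : ℕ → ℝ) (hlam : ∀ n, 0 < lam n)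
    (hlamlim : Tendsto lam atTop (𝓝 1))
    (z : ℂ) (hz : ‖z‖ < 1)
    (hrec : ∀ n, x (n + 1) * y n - z ^ 2 * x n * y (n + 1) = (lam n : ℂ))
    (xinf : ℂ) (hxinf : xinf ≠ 0) (hxlim : Tendsto x atTop (𝓝 xinf))
    (hyz : Tendsto (fun n => z ^ (2 * n) * y n) atTop (𝓝 0)) :
    Tendsto y atTop (𝓝 (1 / (xinf * (1 - z ^ 2)))) := by
  have hx1lim : Tendsto (fun n => x (n + 1)) atTop (𝓝 xinf) :=
    hxlim.comp (tendsto_add_atTop_nat 1)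
  have hlamC : Tendsto (fun n => ((lam n : ℝ) : ℂ)) atTop (𝓝 1) := by
    have := (Complex.continuous_ofReal.tendsto (1 : ℝ)).comp hlamlim
    simpa [Function.comp_def] using this
  rcases eq_or_ne z 0 with hz0 | hz0
  · -- z = 0 case: y n = lam n / x (n+1)
    have hyeq : ∀ n, y n = (lam n : ℂ) / x (n + 1) := by
      intro n
      have h := hrec n
      rw [hz0] at h
      rw [eq_div_iff (hx (n + 1))]
      linear_combination h
    have : Tendsto (fun n => (lam n : ℂ) / x (n + 1)) atTop (𝓝 (1 / xinf)) :=
      hlamC.div hx1lim hxinf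
    subst hz0
    simp only [funext hyeq]
    simpa using this
  · -- main case z ≠ 0
    set w : ℂ := z ^ 2 with hw
    have hw0 : w ≠ 0 := pow_ne_zero _ hz0
    have hwnorm : ‖w‖ < 1 := by
      rw [hw, norm_pow]
      calc ‖z‖ ^ 2 ≤ ‖z‖ := by nlinarith [norm_nonneg z]
        _ < 1 := hz
    have hw1 : (1 : ℂ) - w ≠ 0 := by
      intro h
      have : w = 1 := by linear_combination -h
      rw [this] at hwnorm; simp at hwnorm
    set δ : ℕ → ℂ := fun k => (lam k : ℂ) / (x k * x (k + 1)) with hδ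
    set t : ℕ → ℂ := fun k => w ^ k * y k / x k with ht
    have hstep : ∀ k, t k - t (k + 1) = w ^ k * δ k := by
      intro k
      have heq : t k - t (k + 1)
          = w ^ k * ((x (k + 1) * y k - w * x k * y (k + 1)) / (x k * x (k + 1))) := by
        simp only [ht]
        field_simp [hx k, hx (k + 1)]
        ring
      rw [heq, hrec k]
    have ht0 : Tendsto t atTop (𝓝 0) := by
      have : Tendsto (fun n => z ^ (2 * n) * y n / x n) atTop (𝓝 (0 / xinf)) :=
        hyz.div hxlim hxinf
      simp only [zero_div] at this
      convert this using 2 with n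
      show (z ^ 2) ^ n * y n / x n = _
      rw [← pow_mul]
    -- δ tends to 1/xinf^2
    have hδlim : Tendsto δ atTop (𝓝 (1 / xinf ^ 2)) := by
      have hden : Tendsto (fun k => x k * x (k + 1)) atTop (𝓝 (xinf * xinf)) :=
        hxlim.mul hx1lim
      have := hlamC.div hden (mul_ne_zero hxinf hxinf)
      simpa [pow_two, hδ, Pi.div_def] using this
    -- bound on δ
    obtain ⟨M, hM⟩ : ∃ M, ∀ k, ‖δ k‖ ≤ M := by
      obtain ⟨M, hM⟩ := hδlim.norm.bddAbove_range
      exact ⟨M, fun k => hM (Set.mem_range_self k)⟩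
    have hgeo : Summable (fun j : ℕ => ‖w‖ ^ j) := summable_geometric_of_lt_one (norm_nonneg w) hwnorm
    have hS1 : ∀ n, Summable (fun j => w ^ j * δ (n + j)) := by
      intro n
      apply Summable.of_norm_bounded (hgeo.mul_right M)
      intro j
      rw [norm_mul, norm_pow]
      exact mul_le_mul_of_nonneg_left (hM _) (by positivity)
    set c : ℕ → ℂ := fun n => ∑' j, w ^ j * δ (n + j) with hc
    have hkey : ∀ n, y n = x n * c n := by
      intro n
      have hsum : Summable (fun j => w ^ (n + j) * δ (n + j)) := by
        have := (hS1 n).mul_left (w ^ n)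
        refine this.congr (fun j => ?_)
        rw [← mul_assoc, ← pow_add]
      have hhs : HasSum (fun j => w ^ (n + j) * δ (n + j)) (t n) := by
        rw [hsum.hasSum_iff_tendsto_nat]
        have hps : ∀ m, ∑ j ∈ Finset.range m, w ^ (n + j) * δ (n + j) = t n - t (n + m) := by
          intro m
          have h0 := Finset.sum_range_sub' (fun j => t (n + j)) m
          simp only [Nat.add_zero] at h0
          rw [← h0]
          apply Finset.sum_congr rfl
          intro j _
          exact (hstep (n + j)).symm
        simp only [hps]
        have : Tendsto (fun m => t (n + m)) atTop (𝓝 0) := by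
          have := ht0.comp (tendsto_add_atTop_nat n)
          convert this using 2 with m
          simp [Nat.add_comm]
        simpa using tendsto_const_nhds.sub this
      have htsum : t n = w ^ n * c n := by
        rw [← hhs.tsum_eq, hc]
        rw [← tsum_mul_left]
        congr 1 with j
        rw [← mul_assoc, ← pow_add]
      have : w ^ n * y n / x n = w ^ n * c n := by rw [← htsum, ht]
      have hwn : w ^ n ≠ 0 := pow_ne_zero _ hw0
      rw [div_eq_iff (hx n)] at this
      exact mul_left_cancel₀ hwn (by linear_combination this)
    -- limit of c
    have hSL : Summable (fun j : ℕ => w ^ j * (1 / xinf ^ 2)) :=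
      (summable_geometric_of_norm_lt_one hwnorm).mul_right _
    have hL'val : ∑' j : ℕ, w ^ j * (1 / xinf ^ 2) = (1 - w)⁻¹ * (1 / xinf ^ 2) := by
      rw [tsum_mul_right, tsum_geometric_of_norm_lt_one hwnorm]
    have hclim : Tendsto c atTop (𝓝 ((1 - w)⁻¹ * (1 / xinf ^ 2))) := by
      rw [Metric.tendsto_atTop]
      intro ε hε
      have hr1 : (0:ℝ) < 1 - ‖w‖ := by linarith
      set ε0 : ℝ := ε * (1 - ‖w‖) / 2 with hε0
      have hε0pos : 0 < ε0 := by positivity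
      obtain ⟨N, hN⟩ := (Metric.tendsto_atTop.mp hδlim) ε0 hε0pos
      refine ⟨N, fun n hn => ?_⟩
      rw [dist_eq_norm, ← hL'val]
      have hsub : c n - ∑' j : ℕ, w ^ j * (1 / xinf ^ 2)
          = ∑' j : ℕ, (w ^ j * δ (n + j) - w ^ j * (1 / xinf ^ 2)) := by
        rw [hc, ← Summable.tsum_sub (hS1 n) hSL]
      rw [hsub]
      have hbound : ‖∑' j : ℕ, (w ^ j * δ (n + j) - w ^ j * (1 / xinf ^ 2))‖
          ≤ (1 - ‖w‖)⁻¹ * ε0 := by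
        apply tsum_of_norm_bounded
          ((hasSum_geometric_of_lt_one (norm_nonneg w) hwnorm).mul_right ε0)
        intro j
        rw [← mul_sub, norm_mul, norm_pow]
        apply mul_le_mul_of_nonneg_left _ (by positivity)
        have := hN (n + j) (le_trans hn (Nat.le_add_right n j))
        rw [dist_eq_norm] at this
        exact this.le
      calc ‖_‖ ≤ (1 - ‖w‖)⁻¹ * ε0 := hbound
        _ = ε / 2 := by
            rw [hε0]
            linear_combination (ε / 2) * inv_mul_cancel₀ hr1.ne'
        _ < ε := by linarith
    have := hxlim.mul hclim
    have heq : xinf * ((1 - w)⁻¹ * (1 / xinf ^ 2)) = 1 / (xinf * (1 - z ^ 2)) := by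
      rw [hw]
      field_simp
    rw [heq] at this
    convert this using 2 with n
    exact hkey n
end

section
/- Let $\delta > 0$, $|x| < \delta/2$, $|z| < 1-\delta$, $|\omega| = 1$, and define $b_n(z, (1-x)\omega) = W_n\left(\frac{x}{1-\omega^{-1}z}\right) / W_n\left(\frac{-x\omega^{-1}z}{1-\omega^{-1}z}\right)$ where $W_n(w) = (1-w)\exp\left(\sum_{k=1}^n w^k/k\right)$. Then $|b_n(z,(1-x)\omega) - 1| \leq 4 \delta^{-n-1} x^{n+1}$ for real $x \geq 0$. -/
open Complex Finset
set_option maxHeartbeats 1000000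

noncomputable def Wfac (n : ℕ) (w : ℂ) : ℂ :=
  (1 - w) * Complex.exp (∑ k ∈ Finset.range n, w ^ (k + 1) / (k + 1))

lemma logtail_bound (n : ℕ) (w : ℂ) (t : ℝ) (hw : ‖w‖ ≤ t) (ht : t < 1/2) :
    ‖Complex.log (1 - w) + ∑ k ∈ Finset.range n, w ^ (k + 1) / (k + 1)‖
      ≤ 2 * t ^ (n + 1) / (n + 1) := by
  have ht0 : 0 ≤ t := le_trans (norm_nonneg w) hw
  have hw1 : ‖w‖ < 1 := lt_of_le_of_lt hw (by linarith)
  have ht1 : t < 1 := by linarith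
  have hg := Complex.hasSum_taylorSeries_neg_log hw1
  have hshift : HasSum (fun k : ℕ ↦ w ^ (k + (n+1)) / (k + (n+1) : ℕ))
      (-Complex.log (1 - w) - ∑ i ∈ Finset.range (n+1), w ^ i / i) := by
    refine (hasSum_nat_add_iff (f := fun k : ℕ ↦ w ^ k / (k : ℂ)) (n+1)).mpr ?_
    rwa [sub_add_cancel]
  have hsum_eq : ∑ i ∈ Finset.range (n+1), w ^ i / (i : ℂ)
      = ∑ k ∈ Finset.range n, w ^ (k + 1) / (k + 1) := by
    rw [Finset.sum_range_succ']
    push_cast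
    simp
  have hshift' : HasSum (fun k : ℕ ↦ w ^ (k + (n+1)) / (k + (n+1) : ℕ))
      (-(Complex.log (1 - w) + ∑ k ∈ Finset.range n, w ^ (k + 1) / (k + 1))) := by
    rw [← hsum_eq]; convert hshift using 1; ring
  have hm : HasSum (fun k : ℕ ↦ t ^ (n+1) / (n+1) * t ^ k)
      (t ^ (n+1) / (n+1) * (1 - t)⁻¹) :=
    (hasSum_geometric_of_lt_one ht0 ht1).mul_left _
  have hterm : ∀ k : ℕ, ‖w ^ (k + (n+1)) / ((k + (n+1) : ℕ) : ℂ)‖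
      ≤ t ^ (n+1) / (n+1) * t ^ k := by
    intro k
    rw [norm_div, norm_pow, Complex.norm_natCast]
    have h1 : ‖w‖ ^ (k + (n+1)) ≤ t ^ (n+1) * t ^ k := by
      rw [pow_add, mul_comm]
      gcongr
    have h2 : (0:ℝ) < (n:ℝ) + 1 := by positivity
    have h3 : ((n:ℝ) + 1) ≤ ((k + (n+1) : ℕ) : ℝ) := by push_cast; linarith
    calc ‖w‖ ^ (k + (n+1)) / ((k + (n+1) : ℕ) : ℝ)
        ≤ (t ^ (n+1) * t ^ k) / ((n:ℝ) + 1) := by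
          apply div_le_div₀ (by positivity) h1 h2 h3
      _ = t ^ (n+1) / (n+1) * t ^ k := by ring
  have hnorm := HasSum.norm_le_of_bounded hshift' hm hterm
  rw [norm_neg] at hnorm
  refine hnorm.trans ?_
  have hinv : (1 - t)⁻¹ ≤ 2 := by
    rw [inv_le_comm₀ (by linarith) (by norm_num)]
    linarith
  calc t ^ (n+1) / (n+1) * (1 - t)⁻¹ ≤ t ^ (n+1) / (n+1) * 2 := by
        apply mul_le_mul_of_nonneg_left hinv (by positivity)
    _ = 2 * t ^ (n+1) / (n+1) := by ring

theorem stmt_3 (n : ℕ) (δ : ℝ) (hδ : 0 < δ) (z ω : ℂ) (hz : ‖z‖ < 1 - δ)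
    (hω : ‖ω‖ = 1) (x : ℝ) (hx0 : 0 ≤ x) (hx : x < δ / 2) :
    ‖Wfac n ((x : ℂ) / (1 - ω⁻¹ * z)) / Wfac n (-(x : ℂ) * ω⁻¹ * z / (1 - ω⁻¹ * z)) - 1‖
      ≤ 4 / δ ^ (n + 1) * x ^ (n + 1) := by
  have hz0 : (0:ℝ) ≤ ‖z‖ := norm_nonneg z
  have hω1 : ‖ω⁻¹‖ = 1 := by rw [norm_inv, hω]; norm_num
  set q : ℂ := ω⁻¹ * z with hq
  have hqnorm : ‖q‖ = ‖z‖ := by rw [hq, norm_mul, hω1, one_mul]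
  have hD : δ < ‖1 - q‖ := by
    have h1 : ‖(1:ℂ)‖ - ‖q‖ ≤ ‖1 - q‖ := norm_sub_norm_le 1 q
    rw [norm_one, hqnorm] at h1
    linarith
  have hDpos : (0:ℝ) < ‖1 - q‖ := lt_trans hδ hD
  have hDne : (1:ℂ) - q ≠ 0 := by
    intro h; rw [h, norm_zero] at hDpos; exact lt_irrefl 0 hDpos
  set u : ℂ := (x:ℂ) / (1 - q) with hu_def
  set v : ℂ := -(x:ℂ) * ω⁻¹ * z / (1 - q) with hv_def
  set t : ℝ := x / δ with ht_def
  have ht0 : 0 ≤ t := div_nonneg hx0 hδ.le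
  have ht2 : t < 1/2 := by
    rw [ht_def, div_lt_iff₀ hδ]
    linarith
  have hxnorm : ‖(x:ℂ)‖ = x := by rw [Complex.norm_real, Real.norm_eq_abs, _root_.abs_of_nonneg hx0]
  have hu : ‖u‖ ≤ t := by
    rw [hu_def, norm_div, hxnorm, ht_def]
    exact div_le_div₀ hx0 le_rfl hδ hD.le
  have hvnum : ‖-(x:ℂ) * ω⁻¹ * z‖ = x * ‖z‖ := by
    rw [norm_mul, norm_mul, norm_neg, hxnorm, hω1, mul_one]
  have hv : ‖v‖ ≤ t := by
    rw [hv_def, norm_div, hvnum, ht_def]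
    apply div_le_div₀ hx0 _ hδ hD.le
    nlinarith
  have hvne : (1:ℂ) - v ≠ 0 := by
    intro h
    have : ‖(1:ℂ)‖ - ‖v‖ ≤ ‖1 - v‖ := norm_sub_norm_le 1 v
    rw [h, norm_zero, norm_one] at this
    linarith
  have hune : (1:ℂ) - u ≠ 0 := by
    intro h
    have : ‖(1:ℂ)‖ - ‖u‖ ≤ ‖1 - u‖ := norm_sub_norm_le 1 u
    rw [h, norm_zero, norm_one] at this
    linarith
  have hrhs : 4 / δ ^ (n+1) * x ^ (n+1) = 4 * t ^ (n+1) := by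
    rw [ht_def, div_pow]
    field_simp
  rw [hrhs]
  cases n with
  | zero =>
    have hW0 : ∀ w : ℂ, Wfac 0 w = 1 - w := by
      intro w; simp [Wfac]
    rw [hW0, hW0]
    have heq : (1 - u) / (1 - v) - 1 = (v - u) / (1 - v) := by
      field_simp
      ring
    rw [heq, norm_div]
    have h1 : ‖v - u‖ ≤ 2 * t := by
      calc ‖v - u‖ ≤ ‖v‖ + ‖u‖ := norm_sub_le v u
        _ ≤ t + t := add_le_add hv hu
        _ = 2 * t := by ring
    have h2 : (1:ℝ)/2 ≤ ‖1 - v‖ := by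
      have : ‖(1:ℂ)‖ - ‖v‖ ≤ ‖1 - v‖ := norm_sub_norm_le 1 v
      rw [norm_one] at this
      linarith
    calc ‖v - u‖ / ‖1 - v‖ ≤ (2 * t) / (1/2) :=
          div_le_div₀ (by linarith) h1 (by norm_num) h2
      _ = 4 * t ^ (0+1) := by ring
  | succ m =>
    set N := m + 1 with hN
    set f : ℂ → ℂ := fun w ↦ Complex.log (1 - w) + ∑ k ∈ Finset.range N, w ^ (k + 1) / (k + 1)
      with hf_def
    have hWexp : ∀ w : ℂ, (1:ℂ) - w ≠ 0 → Wfac N w = Complex.exp (f w) := by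
      intro w hw
      rw [Wfac, hf_def]
      rw [Complex.exp_add, Complex.exp_log hw]
    rw [hWexp u hune, hWexp v hvne, ← Complex.exp_sub]
    have hfu : ‖f u‖ ≤ 2 * t ^ (N+1) / (N+1) := logtail_bound N u t hu ht2
    have hfv : ‖f v‖ ≤ 2 * t ^ (N+1) / (N+1) := logtail_bound N v t hv ht2
    have hS : ‖f u - f v‖ ≤ 4 * t ^ (N+1) / (N+1) := by
      calc ‖f u - f v‖ ≤ ‖f u‖ + ‖f v‖ := norm_sub_le _ _
        _ ≤ 2 * t ^ (N+1) / (N+1) + 2 * t ^ (N+1) / (N+1) := add_le_add hfu hfv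
        _ = 4 * t ^ (N+1) / (N+1) := by ring
    have hN2 : (2:ℝ) ≤ (N:ℝ) + 1 := by
      rw [hN]; push_cast; linarith [Nat.cast_nonneg (α := ℝ) m]
    have hS2 : ‖f u - f v‖ ≤ 2 * t ^ (N+1) := by
      refine hS.trans ?_
      rw [div_le_iff₀ (by linarith)]
      nlinarith [pow_nonneg ht0 (N+1)]
    have htpow : t ^ (N+1) ≤ (1/2 : ℝ) ^ (N+1) := pow_le_pow_left₀ ht0 ht2.le _
    have htpow2 : (1/2:ℝ) ^ (N+1) ≤ (1/2:ℝ) ^ 2 := by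
      apply pow_le_pow_of_le_one (by norm_num) (by norm_num)
      omega
    have hS1 : ‖f u - f v‖ ≤ 1 := by
      have : (2:ℝ) * t ^ (N+1) ≤ 2 * (1/2)^2 := by nlinarith
      calc ‖f u - f v‖ ≤ 2 * t ^ (N+1) := hS2
        _ ≤ 2 * (1/2)^2 := this
        _ ≤ 1 := by norm_num
    have habs := Complex.norm_exp_sub_one_le (x := f u - f v) hS1
    calc ‖Complex.exp (f u - f v) - 1‖ ≤ 2 * ‖f u - f v‖ := habs
      _ ≤ 2 * (2 * t ^ (N+1)) := by linarith
      _ = 4 * t ^ (N+1) := by ring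
end
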